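/- For a commutative Hopf algebra A, the map ψ : A⊗A → A⊗A, ψ(α ⊗ β) = β⁽²⁾ ⊗ α S(β⁽¹⁾) β⁽³⁾, is an algebra homomorphism with respect to the tensor product algebra structure on A⊗A. -/

import Mathlib

open TensorProduct LinearMap Coalgebra

noncomputable section

set_option maxHeartbeats 1000000

variable (k A : Type*) [Field k] [CommRing A] [HopfAlgebra k A]

/-- The map A ⊗ (A ⊗ A) → A ⊗ A, x ⊗ (y ⊗ z) ↦ y ⊗ (x·z). -/
def gAux : A ⊗[k] (A ⊗[k] A) →ₗ[k] A ⊗[k] A :=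
  lTensor A (LinearMap.mul' k A) ∘ₗ (TensorProduct.assoc k A A A).toLinearMap ∘ₗ
    rTensor A (TensorProduct.comm k A A).toLinearMap ∘ₗ
    (TensorProduct.assoc k A A A).symm.toLinearMap

/-- The map R : A ⊗ A → A ⊗ A, α ⊗ β ↦ β⁽²⁾ ⊗ α·S(β⁽¹⁾)·β⁽³⁾ (Sweedler notation). -/
def Rmap : A ⊗[k] A →ₗ[k] A ⊗[k] A :=
  gAux k A ∘ₗ lTensor A (gAux k A) ∘ₗ
    lTensor A (rTensor (A ⊗[k] A) (HopfAlgebra.antipode (R := k))) ∘ₗ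
    lTensor A (lTensor A (comul (R := k) (A := A)) ∘ₗ comul)

/-- The map R⁻¹ : A ⊗ A → A ⊗ A, α ⊗ β ↦ α⁽¹⁾·S(α⁽³⁾)·β ⊗ α⁽²⁾ (Sweedler notation). -/
def RmapInv : A ⊗[k] A →ₗ[k] A ⊗[k] A :=
  ((TensorProduct.comm k A A).toLinearMap ∘ₗ gAux k A) ∘ₗ
    lTensor A (lTensor A (LinearMap.mul' k A)) ∘ₗ
    lTensor A (TensorProduct.assoc k A A A).toLinearMap ∘ₗ
    (TensorProduct.assoc k A (A ⊗[k] A) A).toLinearMap ∘ₗ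
    rTensor A (lTensor A (lTensor A (HopfAlgebra.antipode (R := k))) ∘ₗ
      lTensor A (comul (R := k) (A := A)) ∘ₗ comul)


local notation "S" => HopfAlgebra.antipode (R := k) (A := A)

lemma antipode_one' : S 1 = 1 := by
  have := HopfAlgebra.mul_antipode_rTensor_comul_apply (R := k) (A := A) 1
  simpa [Algebra.TensorProduct.one_def] using this

variable {k A}

lemma repr_smul_right {ι : Type*} {a : A} (r : Repr k a ι) :
    ∑ i ∈ r.index, counit (R := k) (r.left i) • r.right i = a := by
  have h := sum_counit_tmul_eq (R := k) r
  have := congrArg (TensorProduct.lid k A) h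
  simp only [map_sum, lid_tmul, one_smul] at this
  exact this

lemma repr_smul_left {ι : Type*} {a : A} (r : Repr k a ι) :
    ∑ i ∈ r.index, counit (R := k) (r.right i) • r.left i = a := by
  have h := sum_tmul_counit_eq (R := k) r
  have := congrArg (TensorProduct.rid k A) h
  simp only [map_sum, rid_tmul, one_smul] at this
  exact this

lemma beta_sum {ι κ : Type*} (c d : A) (rc : Repr k c ι) (rd : Repr k d κ) :
    ∑ p ∈ rc.index, ∑ q ∈ rd.index,
      S (rc.left p * rd.left q) * (rc.right p * rd.right q)
      = (counit (R := k) c * counit (R := k) d) • (1 : A) := by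
  have hu : (∑ p ∈ rc.index, ∑ q ∈ rd.index,
      (rc.left p * rd.left q) ⊗ₜ[k] (rc.right p * rd.right q))
      = comul (R := k) (c * d) := by
    rw [Bialgebra.comul_mul, ← rc.eq, ← rd.eq, Finset.sum_mul_sum]
    simp [Algebra.TensorProduct.tmul_mul_tmul]
  have h2 := congrArg (fun u => LinearMap.mul' k A ((HopfAlgebra.antipode (R := k)).rTensor A u)) hu
  simp only [map_sum, rTensor_tmul, mul'_apply] at h2
  rw [h2, HopfAlgebra.mul_antipode_rTensor_comul_apply, Bialgebra.counit_mul,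
    Algebra.smul_def, mul_one]

variable (k A)

/-- Auxiliary multiplication map for the antipode-multiplicativity proof. -/
def omg : (A ⊗[k] (A ⊗[k] A)) ⊗[k] (A ⊗[k] (A ⊗[k] A)) →ₗ[k] A :=
  LinearMap.mul' k A ∘ₗ
    map ((HopfAlgebra.antipode (R := k)) ∘ₗ LinearMap.mul' k A)
      (LinearMap.mul' k A ∘ₗ
        map (LinearMap.mul' k A)
          (LinearMap.mul' k A ∘ₗ map (HopfAlgebra.antipode (R := k)) (HopfAlgebra.antipode (R := k)))
        ∘ₗ (tensorTensorTensorComm k A A A A).toLinearMap) ∘ₗ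
    (tensorTensorTensorComm k A (A ⊗[k] A) A (A ⊗[k] A)).toLinearMap

@[simp] lemma omg_apply (x y z u v w : A) :
    omg k A ((x ⊗ₜ (y ⊗ₜ z)) ⊗ₜ (u ⊗ₜ (v ⊗ₜ w)))
      = S (x * u) * (y * v * (S z * S w)) := by
  simp [omg, tensorTensorTensorComm_tmul]

variable {k A}

lemma hS {ι : Type*} (s : Finset ι) (c : ι → k) (x : ι → A) :
    (∑ i ∈ s, c i • S (x i)) = S (∑ i ∈ s, c i • x i) := by
  rw [map_sum]
  exact Finset.sum_congr rfl fun i _ => (map_smul _ _ _).symm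

lemma antipode_mul (a b : A) : S (a * b) = S a * S b := by
  classical
  set ra := ℛ k a
  set rb := ℛ k b
  set r2 : ∀ i, Repr k (ra.right i) (A × A) := fun i => ℛ k _
  set l2 : ∀ i, Repr k (ra.left i) (A × A) := fun i => ℛ k _
  set s2 : ∀ j, Repr k (rb.right j) (A × A) := fun j => ℛ k _
  set m2 : ∀ j, Repr k (rb.left j) (A × A) := fun j => ℛ k _
  have hTa : (∑ i ∈ ra.index, ∑ p ∈ (l2 i).index,
        (l2 i).left p ⊗ₜ[k] ((l2 i).right p ⊗ₜ[k] ra.right i))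
      = ∑ i ∈ ra.index, ∑ p ∈ (r2 i).index,
        ra.left i ⊗ₜ[k] ((r2 i).left p ⊗ₜ[k] (r2 i).right p) :=
    sum_tmul_tmul_eq (R := k) ra l2 r2
  have hTb : (∑ j ∈ rb.index, ∑ q ∈ (m2 j).index,
        (m2 j).left q ⊗ₜ[k] ((m2 j).right q ⊗ₜ[k] rb.right j))
      = ∑ j ∈ rb.index, ∑ q ∈ (s2 j).index,
        rb.left j ⊗ₜ[k] ((s2 j).left q ⊗ₜ[k] (s2 j).right q) :=
    sum_tmul_tmul_eq (R := k) rb m2 s2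
  -- Claim 2 : omg (Tar ⊗ Tbr) = S (a*b)
  have hC2 : omg k A ((∑ i ∈ ra.index, ∑ p ∈ (r2 i).index,
        ra.left i ⊗ₜ[k] ((r2 i).left p ⊗ₜ[k] (r2 i).right p)) ⊗ₜ[k]
      (∑ j ∈ rb.index, ∑ q ∈ (s2 j).index,
        rb.left j ⊗ₜ[k] ((s2 j).left q ⊗ₜ[k] (s2 j).right q))) = S (a * b) := by
    simp only [sum_tmul, tmul_sum, map_sum, omg_apply]
    have step1 : ∀ j ∈ rb.index, ∀ q ∈ (s2 j).index,
        (∑ i ∈ ra.index, ∑ p ∈ (r2 i).index,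
          S (ra.left i * rb.left j) *
            ((r2 i).left p * (s2 j).left q * (S ((r2 i).right p) * S ((s2 j).right q))))
        = S (a * rb.left j) * ((s2 j).left q * S ((s2 j).right q)) := by
      intro j _ q _
      have inner : ∀ i ∈ ra.index,
          (∑ p ∈ (r2 i).index,
            S (ra.left i * rb.left j) *
              ((r2 i).left p * (s2 j).left q * (S ((r2 i).right p) * S ((s2 j).right q))))
          = counit (R := k) (ra.right i) •
              (S (ra.left i * rb.left j) * ((s2 j).left q * S ((s2 j).right q))) := by
        intro i _
        have : (∑ p ∈ (r2 i).index,
            S (ra.left i * rb.left j) *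
              ((r2 i).left p * (s2 j).left q * (S ((r2 i).right p) * S ((s2 j).right q))))
            = (S (ra.left i * rb.left j) * ((s2 j).left q * S ((s2 j).right q))) *
                ∑ p ∈ (r2 i).index, (r2 i).left p * S ((r2 i).right p) := by
          rw [Finset.mul_sum]
          exact Finset.sum_congr rfl fun p _ => by ring
        rw [this, HopfAlgebra.sum_mul_antipode_eq_smul (R := k) (r2 i),
          mul_smul_comm, mul_one]
      rw [Finset.sum_congr rfl inner]
      have h2 : ∑ i ∈ ra.index, counit (R := k) (ra.right i) • (ra.left i * rb.left j)
          = a * rb.left j := by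
        simp_rw [← smul_mul_assoc]
        rw [← Finset.sum_mul, repr_smul_left ra]
      calc ∑ i ∈ ra.index, counit (R := k) (ra.right i) •
              (S (ra.left i * rb.left j) * ((s2 j).left q * S ((s2 j).right q)))
          = (∑ i ∈ ra.index, counit (R := k) (ra.right i) • S (ra.left i * rb.left j)) *
              ((s2 j).left q * S ((s2 j).right q)) := by
            rw [Finset.sum_mul]
            exact Finset.sum_congr rfl fun i _ => (smul_mul_assoc _ _ _).symm
        _ = S (a * rb.left j) * ((s2 j).left q * S ((s2 j).right q)) := by
            rw [hS ra.index (fun i => counit (R := k) (ra.right i))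
              (fun i => ra.left i * rb.left j), h2]
    rw [Finset.sum_congr rfl fun j hj =>
      Finset.sum_congr rfl fun q hq => step1 j hj q hq]
    have step2 : ∀ j ∈ rb.index,
        (∑ q ∈ (s2 j).index, S (a * rb.left j) * ((s2 j).left q * S ((s2 j).right q)))
        = counit (R := k) (rb.right j) • S (a * rb.left j) := by
      intro j _
      rw [← Finset.mul_sum, HopfAlgebra.sum_mul_antipode_eq_smul (R := k) (s2 j),
        mul_smul_comm, mul_one]
    rw [Finset.sum_congr rfl step2]
    have h3 : ∑ j ∈ rb.index, counit (R := k) (rb.right j) • (a * rb.left j) = a * b := by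
      simp_rw [← mul_smul_comm]
      rw [← Finset.mul_sum, repr_smul_left rb]
    rw [hS rb.index (fun j => counit (R := k) (rb.right j))
      (fun j => a * rb.left j), h3]
  -- Claim 1 : omg (Tal ⊗ Tbl) = S a * S b
  have hC1 : omg k A ((∑ i ∈ ra.index, ∑ p ∈ (l2 i).index,
        (l2 i).left p ⊗ₜ[k] ((l2 i).right p ⊗ₜ[k] ra.right i)) ⊗ₜ[k]
      (∑ j ∈ rb.index, ∑ q ∈ (m2 j).index,
        (m2 j).left q ⊗ₜ[k] ((m2 j).right q ⊗ₜ[k] rb.right j))) = S a * S b := by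
    simp only [sum_tmul, tmul_sum, map_sum, omg_apply]
    -- outer order: j, q, i, p.  Reorder q inward.
    have swap1 : ∀ j ∈ rb.index,
        (∑ q ∈ (m2 j).index, ∑ i ∈ ra.index, ∑ p ∈ (l2 i).index,
          S ((l2 i).left p * (m2 j).left q) *
            ((l2 i).right p * (m2 j).right q * (S (ra.right i) * S (rb.right j))))
        = ∑ i ∈ ra.index, ∑ p ∈ (l2 i).index, ∑ q ∈ (m2 j).index,
          S ((l2 i).left p * (m2 j).left q) *
            ((l2 i).right p * (m2 j).right q * (S (ra.right i) * S (rb.right j))) := by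
      intro j _
      rw [Finset.sum_comm]
      exact Finset.sum_congr rfl fun i _ => Finset.sum_comm
    rw [Finset.sum_congr rfl swap1]
    have step1 : ∀ j ∈ rb.index, ∀ i ∈ ra.index,
        (∑ p ∈ (l2 i).index, ∑ q ∈ (m2 j).index,
          S ((l2 i).left p * (m2 j).left q) *
            ((l2 i).right p * (m2 j).right q * (S (ra.right i) * S (rb.right j))))
        = (counit (R := k) (ra.left i) * counit (R := k) (rb.left j)) •
            (S (ra.right i) * S (rb.right j)) := by
      intro j _ i _
      have : (∑ p ∈ (l2 i).index, ∑ q ∈ (m2 j).index,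
          S ((l2 i).left p * (m2 j).left q) *
            ((l2 i).right p * (m2 j).right q * (S (ra.right i) * S (rb.right j))))
          = (∑ p ∈ (l2 i).index, ∑ q ∈ (m2 j).index,
              S ((l2 i).left p * (m2 j).left q) * ((l2 i).right p * (m2 j).right q)) *
            (S (ra.right i) * S (rb.right j)) := by
        rw [Finset.sum_mul]
        exact Finset.sum_congr rfl fun p _ => by
          rw [Finset.sum_mul]
          exact Finset.sum_congr rfl fun q _ => by ring
      rw [this, beta_sum (ra.left i) (rb.left j) (l2 i) (m2 j), smul_mul_assoc, one_mul]
    rw [Finset.sum_congr rfl fun j hj =>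
      Finset.sum_congr rfl fun i hi => step1 j hj i hi]
    have key : ∀ j ∈ rb.index,
        (∑ i ∈ ra.index, (counit (R := k) (ra.left i) * counit (R := k) (rb.left j)) •
          (S (ra.right i) * S (rb.right j)))
        = S a * (counit (R := k) (rb.left j) • S (rb.right j)) := by
      intro j _
      have : ∀ i, (counit (R := k) (ra.left i) * counit (R := k) (rb.left j)) •
          (S (ra.right i) * S (rb.right j))
          = (counit (R := k) (ra.left i) • S (ra.right i)) *
            (counit (R := k) (rb.left j) • S (rb.right j)) := by
        intro i
        rw [mul_smul, smul_mul_assoc, mul_smul_comm]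
      simp_rw [this]
      rw [← Finset.sum_mul, hS ra.index (fun i => counit (R := k) (ra.left i))
        (fun i => ra.right i), repr_smul_right ra]
    rw [Finset.sum_congr rfl key, ← Finset.mul_sum, hS rb.index
      (fun j => counit (R := k) (rb.left j)) (fun j => rb.right j), repr_smul_right rb]
  rw [← hC2, ← hC1, hTa, hTb]

variable (k A)

/-- The antipode as an algebra hom (commutative case). -/
def Salg : A →ₐ[k] A :=
  AlgHom.ofLinearMap (HopfAlgebra.antipode (R := k)) (antipode_one' k A)
    (fun x y => antipode_mul x y)

def fHom : A →ₐ[k] A ⊗[k] A := Algebra.TensorProduct.includeRight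

def hHom : A ⊗[k] (A ⊗[k] A) →ₐ[k] A ⊗[k] A :=
  Algebra.TensorProduct.lift
    (Algebra.TensorProduct.includeRight.comp (Salg k A))
    (AlgHom.id k _) (fun _ _ => Commute.all _ _)

def comul3 : A →ₐ[k] A ⊗[k] (A ⊗[k] A) :=
  (Algebra.TensorProduct.map (AlgHom.id k A) (Bialgebra.comulAlgHom k A)).comp
    (Bialgebra.comulAlgHom k A)

def Psi : A ⊗[k] A →ₐ[k] A ⊗[k] A :=
  Algebra.TensorProduct.lift (fHom k A) ((hHom k A).comp (comul3 k A))
    (fun _ _ => Commute.all _ _)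

lemma comul3_toLinearMap :
    (lTensor A (comul (R := k) (A := A)) ∘ₗ comul (R := k) (A := A))
      = (comul3 k A).toLinearMap := by
  have h1 : (lTensor A (comul (R := k) (A := A)))
      = (Algebra.TensorProduct.map (AlgHom.id k A) (Bialgebra.comulAlgHom k A)).toLinearMap := by
    apply TensorProduct.ext'
    intro x y
    simp [Algebra.TensorProduct.map_tmul]
  ext a
  simp [comul3, h1]

lemma hK : (gAux k A ∘ₗ lTensor A (gAux k A) ∘ₗ
      lTensor A (rTensor (A ⊗[k] A) (HopfAlgebra.antipode (R := k))))
    = LinearMap.mul' k (A ⊗[k] A) ∘ₗ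
        TensorProduct.map (fHom k A).toLinearMap (hHom k A).toLinearMap := by
  ext α x y z
  simp [gAux, hHom, fHom, Salg, Algebra.TensorProduct.lift_tmul,
    Algebra.TensorProduct.tmul_mul_tmul, mul_assoc]

lemma Rmap_eq_Psi : Rmap k A = (Psi k A).toLinearMap := by
  apply TensorProduct.ext'
  intro α β
  have h1 : Rmap k A (α ⊗ₜ β)
      = (gAux k A ∘ₗ lTensor A (gAux k A) ∘ₗ
          lTensor A (rTensor (A ⊗[k] A) (HopfAlgebra.antipode (R := k))))
        (α ⊗ₜ ((lTensor A (comul (R := k) (A := A)) ∘ₗ comul) β)) := by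
    simp [Rmap, lTensor_tmul]
  rw [h1, LinearMap.congr_fun (hK k A), comul3_toLinearMap]
  simp [Psi, Algebra.TensorProduct.lift_tmul, map_tmul, mul'_apply, fHom]

/-- for a commutative Hopf algebra, the map
ψ(α ⊗ β) = β⁽²⁾ ⊗ α·S(β⁽¹⁾)·β⁽³⁾ is an algebra homomorphism of A ⊗ A. -/
theorem Rmap_algHom :
    (∀ x y : A ⊗[k] A, Rmap k A (x * y) = Rmap k A x * Rmap k A y) ∧
      Rmap k A 1 = 1 := by
  constructor
  · intro x y
    rw [Rmap_eq_Psi]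
    exact map_mul (Psi k A) x y
  · rw [Rmap_eq_Psi]
    exact map_one (Psi k A)
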